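/- Projection Slice Theorem: For f ∈ L¹(ℝ²) (or Schwartz), for all θ ∈ [0, π) and ξ ∈ ℝ, the one-dimensional Fourier transform of the Radon projection R_θ f at ξ equals the two-dimensional Fourier transform of f evaluated at (ξ cos θ, ξ sin θ). -/

import Mathlib

open Real MeasureTheory

/-!
The rotation `R_θ (t, s) = t τ_θ + s τ_θ^⊥` carries the vertical line `{t} × ℝ` onto the line
`⟨x, τ_θ⟩ = t`, along which the phase `⟨ξ τ_θ, x⟩` is constantly `ξ t`. So the left-hand side is
the iterated integral of `x ↦ f x e^{-i⟨ξ τ_θ, x⟩}` composed with `R_θ`; by Fubini this is a double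
integral, and since `R_θ` has determinant one it preserves Lebesgue measure, giving the
two-dimensional Fourier integral.
-/

theorem LinearEquiv.measurePreserving_of_abs_det_eq_one {E : Type*} [NormedAddCommGroup E]
    [NormedSpace ℝ E] [MeasurableSpace E] [BorelSpace E] [FiniteDimensional ℝ E]
    (μ : Measure E) [μ.IsAddHaarMeasure] (L : E ≃ₗ[ℝ] E)
    (hL : |LinearMap.det (L : E →ₗ[ℝ] E)| = 1) :
    MeasurePreserving L μ μ where
  measurable := L.toLinearMap.continuous_of_finiteDimensional.measurable
  map_eq := by
    have hdet : LinearMap.det (L : E →ₗ[ℝ] E) ≠ 0 := by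
      intro h; simp [h] at hL
    simpa [hL] using Measure.map_linearMap_addHaar_eq_smul_addHaar μ hdet

theorem MeasureTheory.MeasurePreserving.integral_integral_comp {α β γ E : Type*}
    [MeasurableSpace α] [MeasurableSpace β] [MeasurableSpace γ]
    [NormedAddCommGroup E] [NormedSpace ℝ E]
    {μ : Measure α} {ν : Measure β} {ρ : Measure γ} [SFinite μ] [SFinite ν]
    {T : α × β → γ} (hT : MeasurePreserving T (μ.prod ν) ρ) (hTe : MeasurableEmbedding T)
    {g : γ → E} (hg : Integrable g ρ) :
    ∫ a, ∫ b, g (T (a, b)) ∂ν ∂μ = ∫ x, g x ∂ρ := by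
  rw [integral_integral (f := fun a b => g (T (a, b))) ((hT.integrable_comp_emb hTe).2 hg),
    hT.integral_comp hTe]

theorem MeasureTheory.Integrable.mul_cexp_neg_I_mul {α : Type*} [MeasurableSpace α]
    {μ : Measure α} {f : α → ℂ} (hf : Integrable f μ) {φ : α → ℝ} (hφ : Measurable φ) :
    Integrable (fun x => f x * Complex.exp (-Complex.I * φ x)) μ := by
  refine hf.mul_bdd (c := 1) (by fun_prop) (ae_of_all _ fun x => ?_)
  rw [neg_mul, ← mul_neg, ← Complex.ofReal_neg, Complex.norm_exp_I_mul_ofReal]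

noncomputable def planeRotation (θ : ℝ) : (ℝ × ℝ) ≃ₗ[ℝ] (ℝ × ℝ) where
  toFun p := (p.1 * cos θ - p.2 * sin θ, p.1 * sin θ + p.2 * cos θ)
  invFun p := (p.1 * cos θ + p.2 * sin θ, -p.1 * sin θ + p.2 * cos θ)
  map_add' p q := by ext <;> simp <;> ring
  map_smul' a p := by ext <;> simp <;> ring
  left_inv p := by
    ext
    · dsimp only; linear_combination p.1 * cos_sq_add_sin_sq θ
    · dsimp only; linear_combination p.2 * cos_sq_add_sin_sq θ
  right_inv p := by
    ext
    · dsimp only; linear_combination p.1 * cos_sq_add_sin_sq θ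
    · dsimp only; linear_combination p.2 * cos_sq_add_sin_sq θ

theorem planeRotation_apply (θ : ℝ) (p : ℝ × ℝ) :
    planeRotation θ p = (p.1 * cos θ - p.2 * sin θ, p.1 * sin θ + p.2 * cos θ) := rfl

theorem det_planeRotation (θ : ℝ) :
    LinearMap.det (planeRotation θ : (ℝ × ℝ) →ₗ[ℝ] (ℝ × ℝ)) = 1 := by
  rw [← LinearMap.det_toMatrix (Module.Basis.finTwoProd ℝ), Matrix.det_fin_two]
  simp [LinearMap.toMatrix_apply, planeRotation_apply, ← sq]

theorem measurePreserving_planeRotation (θ : ℝ) :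
    MeasurePreserving (planeRotation θ) :=
  (planeRotation θ).measurePreserving_of_abs_det_eq_one volume (by simp [det_planeRotation])

theorem measurableEmbedding_planeRotation (θ : ℝ) : MeasurableEmbedding (planeRotation θ) :=
  (planeRotation θ).toContinuousLinearEquiv.toHomeomorph.measurableEmbedding

theorem cos_mul_planeRotation_fst_add_sin_mul_snd (θ : ℝ) (p : ℝ × ℝ) :
    cos θ * (planeRotation θ p).1 + sin θ * (planeRotation θ p).2 = p.1 := by
  simp only [planeRotation_apply]
  linear_combination p.1 * cos_sq_add_sin_sq θ

/-- Projection Slice Theorem: the 1D Fourier transform of the Radon projection `R_θ f`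
at `ξ` equals the 2D Fourier transform of `f` at `(ξ cos θ, ξ sin θ)`. -/
theorem projection_slice_theorem
    (f : ℝ × ℝ → ℂ) (hf : Integrable f) :
    ∀ θ ∈ Set.Ico (0 : ℝ) π, ∀ ξ : ℝ,
      (∫ t : ℝ, (∫ s : ℝ, f (t * cos θ - s * sin θ, t * sin θ + s * cos θ)) *
          Complex.exp (-Complex.I * (ξ * t : ℝ))) =
        ∫ x : ℝ × ℝ, f x *
          Complex.exp (-Complex.I * ((ξ * cos θ * x.1 + ξ * sin θ * x.2 : ℝ) : ℂ)) := by
  intro θ _ ξ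
  have hphase (t s : ℝ) : ξ * cos θ * (planeRotation θ (t, s)).1
      + ξ * sin θ * (planeRotation θ (t, s)).2 = ξ * t := by
    linear_combination ξ * cos_mul_planeRotation_fst_add_sin_mul_snd θ (t, s)
  rw [← (measurePreserving_planeRotation θ).integral_integral_comp
    (measurableEmbedding_planeRotation θ) (hf.mul_cexp_neg_I_mul (by fun_prop))]
  refine integral_congr_ae (ae_of_all _ fun t => ?_)
  simp only [← integral_mul_const, hphase]
  rfl
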